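/- If an infinite word u is not c-balanced for any c > 0, then its abelian complexity function AC_u is unbounded. -/

import Mathlib

/-- The factor of the infinite word `u` of length `n` starting at position `j`. -/
def factorAt {m : ℕ} (u : ℕ → Fin m) (j n : ℕ) : List (Fin m) :=
  List.ofFn fun i : Fin n => u (j + i)

/-- The relative Parikh vector of the factor of `u` of length `n` starting at `j`:
the Parikh vector of the factor minus the Parikh vector of the prefix of length `n`. -/
def relParikh {m : ℕ} (u : ℕ → Fin m) (n j : ℕ) : Fin m → ℤ :=
  fun a => ((factorAt u j n).count a : ℤ) - ((factorAt u 0 n).count a : ℤ)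

/-- `u` is `c`-balanced. -/
def IsBalanced {m : ℕ} (u : ℕ → Fin m) (c : ℕ) : Prop :=
  ∀ a : Fin m, ∀ n j k : ℕ,
    |((factorAt u j n).count a : ℤ) - ((factorAt u k n).count a : ℤ)| ≤ (c : ℤ)

/-- `φ` is a Parry substitution (simple or non-simple) with exponents `α`. -/
def IsParry {m : ℕ} (hm : 0 < m) (α : Fin m → ℕ) (φ : Fin m → List (Fin m)) : Prop :=
  1 ≤ α ⟨0, hm⟩ ∧ (∀ ℓ : Fin m, α ℓ ≤ α ⟨0, hm⟩) ∧
  (∀ i : Fin m, ∀ hi : i.val + 1 < m,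
      φ i = List.replicate (α i) ⟨0, hm⟩ ++ [⟨i.val + 1, hi⟩]) ∧
  (∀ i : Fin m, i.val + 1 = m →
    (1 ≤ α i ∧ φ i = List.replicate (α i) ⟨0, hm⟩) ∨
    (∃ p : Fin m, φ i = List.replicate (α i) ⟨0, hm⟩ ++ [p] ∧
      ∃ ℓ : Fin m, p ≤ ℓ ∧ 1 ≤ α ℓ))

/-- `φ` is a simple Parry substitution with exponents `α`. -/
def IsSimpleParry {m : ℕ} (hm : 0 < m) (α : Fin m → ℕ) (φ : Fin m → List (Fin m)) : Prop :=
  1 ≤ α ⟨0, hm⟩ ∧ (∀ ℓ : Fin m, α ℓ ≤ α ⟨0, hm⟩) ∧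
  (∀ i : Fin m, i.val + 1 = m → 1 ≤ α i) ∧
  (∀ i : Fin m, ∀ hi : i.val + 1 < m,
      φ i = List.replicate (α i) ⟨0, hm⟩ ++ [⟨i.val + 1, hi⟩]) ∧
  (∀ i : Fin m, i.val + 1 = m → φ i = List.replicate (α i) ⟨0, hm⟩)

/-- `u` is the fixed point of `φ` starting with the letter `0`:
every iterate `φ^k(0)` is a prefix of `u`. -/
def IsFixedPoint {m : ℕ} (hm : 0 < m) (φ : Fin m → List (Fin m)) (u : ℕ → Fin m) : Prop :=
  ∀ k i : ℕ, ∀ h : i < ((fun v => v.flatMap φ)^[k] [(⟨0, hm⟩ : Fin m)]).length,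
    ((fun v => v.flatMap φ)^[k] [(⟨0, hm⟩ : Fin m)])[i] = u i

/-- `U_j = |φ^j(0)|`. -/
def Uval {m : ℕ} (hm : 0 < m) (φ : Fin m → List (Fin m)) (j : ℕ) : ℕ :=
  ((fun v => v.flatMap φ)^[j] [(⟨0, hm⟩ : Fin m)]).length

/-! An unbalanced letter `a` gives equal-length factors whose `a`-counts differ by more than any
bound. Sliding a window of fixed length one step changes the `a`-count by at most one, so by a
discrete intermediate value argument every count in between is attained, and each attained count
belongs to a different Parikh vector. -/

open Set

variable {m : ℕ}

theorem length_factorAt (u : ℕ → Fin m) (j n : ℕ) : (factorAt u j n).length = n := by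
  simp [factorAt]

theorem factorAt_succ (u : ℕ → Fin m) (j n : ℕ) :
    factorAt u j (n + 1) = factorAt u j n ++ [u (j + n)] := by
  simp only [factorAt, List.ofFn_succ', List.concat_eq_append, Fin.val_last, Fin.val_castSucc]

theorem factorAt_succ_eq_cons (u : ℕ → Fin m) (j n : ℕ) :
    factorAt u j (n + 1) = u j :: factorAt u (j + 1) n := by
  simp only [factorAt, List.ofFn_succ, Fin.val_zero, add_zero, Fin.val_succ]
  congr 2
  funext i
  rw [add_assoc, add_comm 1]

theorem abs_count_factorAt_succ_sub_le (u : ℕ → Fin m) (a : Fin m) (j n : ℕ) :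
    |((factorAt u (j + 1) n).count a : ℤ) - (factorAt u j n).count a| ≤ 1 := by
  have h := congrArg (List.count a) <|
    (factorAt_succ_eq_cons u j n).symm.trans (factorAt_succ u j n)
  simp only [List.count_cons, List.count_append, List.count_nil] at h
  rw [abs_le]
  split_ifs at h <;> constructor <;> omega

theorem uIcc_subset_range_of_abs_sub_le_one (f : ℕ → ℤ) (hf : ∀ t, |f (t + 1) - f t| ≤ 1)
    (j k : ℕ) : uIcc (f j) (f k) ⊆ range f := by
  wlog hjk : j ≤ k generalizing j k
  · rw [uIcc_comm]
    exact this k j (le_of_not_ge hjk)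
  induction k, hjk using Nat.le_induction with
  | base => simp
  | succ k _ ih =>
    intro v hv
    rcases uIcc_subset_uIcc_union_uIcc hv with hv | hv
    · exact ih hv
    · have hstep := abs_le.mp (hf k)
      rw [mem_uIcc] at hv
      rcases eq_or_ne v (f k) with rfl | hvk
      · exact mem_range_self k
      · exact ⟨k + 1, by omega⟩

def parikhVectors (u : ℕ → Fin m) (n : ℕ) : Set (Fin m → ℕ) :=
  {ψ | ∃ j : ℕ, ψ = fun a => (factorAt u j n).count a}

theorem parikhVectors_finite (u : ℕ → Fin m) (n : ℕ) : (parikhVectors u n).Finite := by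
  refine (finite_Icc 0 fun _ => n).subset ?_
  rintro ψ ⟨j, rfl⟩
  refine ⟨fun _ => Nat.zero_le _, fun a => ?_⟩
  simpa only [length_factorAt] using List.count_le_length (a := a) (l := factorAt u j n)

theorem natAbs_count_factorAt_sub_lt_ncard (u : ℕ → Fin m) (a : Fin m) (n j k : ℕ) :
    (((factorAt u j n).count a : ℤ) - (factorAt u k n).count a).natAbs
      < (parikhVectors u n).ncard := by
  set f : ℕ → ℤ := fun t => (factorAt u t n).count a
  let countA : (Fin m → ℕ) → ℤ := fun ψ => ψ a
  have hcover : uIcc (f k) (f j) ⊆ countA '' parikhVectors u n := by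
    intro v hv
    obtain ⟨t, rfl⟩ :=
      uIcc_subset_range_of_abs_sub_le_one f (abs_count_factorAt_succ_sub_le u a · n) k j hv
    exact ⟨_, ⟨t, rfl⟩, rfl⟩
  calc (f j - f k).natAbs < (uIcc (f k) (f j)).ncard := by
        rw [← Finset.coe_uIcc, ncard_coe_finset, Int.card_uIcc]
        omega
    _ ≤ (countA '' parikhVectors u n).ncard :=
        ncard_le_ncard hcover ((parikhVectors_finite u n).image countA)
    _ ≤ (parikhVectors u n).ncard := ncard_image_le (parikhVectors_finite u n)

/-- If an infinite word `u` is not `c`-balanced for any `c > 0`, then its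
abelian complexity function (the number of distinct Parikh vectors of length-`n` factors)
is unbounded. -/
theorem abelianComplexity_unbounded_of_unbalanced (m : ℕ) (u : ℕ → Fin m)
    (h : ¬ ∃ c : ℕ, 0 < c ∧ IsBalanced u c) :
    ∀ B : ℕ, ∃ n : ℕ,
      B < {ψ : Fin m → ℕ | ∃ j : ℕ, ψ = fun a => (factorAt u j n).count a}.ncard := by
  intro B
  have hB : ¬ IsBalanced u (B + 1) := fun hB => h ⟨B + 1, B.succ_pos, hB⟩
  simp only [IsBalanced, not_forall, not_le] at hB
  obtain ⟨a, n, j, k, hjk⟩ := hB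
  refine ⟨n, ?_⟩
  have hlt := natAbs_count_factorAt_sub_lt_ncard u a n j k
  rw [Int.abs_eq_natAbs] at hjk
  change B < (parikhVectors u n).ncard
  omega
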